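/- Let Ω ⊂ ℝ^d be a bounded open set, S := ℝ^d∖Ω, and let v: Ω → [0,1] be measurable, extended by 0 to ℝ^d. Let h ∈ (0,1] and suppose (1/√h) ∫_Ω (1 − v)(K_h * v) dx ≤ C₁ and (1/√h) ∫_Ω ∫_{ℝ^d} 1_S(x+y) K_h(y) v(x) dy dx ≤ C₂. Then there exists a constant c > 0 depending only on d, a, b, c_K, C₁ and C₂ (and not on v or h) such that ∫_Ω v(1 − v) dx ≤ c √h. -/

import Mathlib

open MeasureTheory Filter

/-- The rescaled kernel `K_h(x) = h^{-d/2} K(x/√h)`. -/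
noncomputable def scaledKernel {d : ℕ} (K : EuclideanSpace ℝ (Fin d) → ℝ) (h : ℝ)
    (x : EuclideanSpace ℝ (Fin d)) : ℝ :=
  h ^ (-(d : ℝ) / 2) * K ((Real.sqrt h)⁻¹ • x)

/-- Convolution over `ℝ^d`: `(f * g)(x) = ∫ f(x-y) g(y) dy`. -/
noncomputable def convK {d : ℕ} (f g : EuclideanSpace ℝ (Fin d) → ℝ)
    (x : EuclideanSpace ℝ (Fin d)) : ℝ :=
  ∫ y, f (x - y) * g y

/-- The approximate thresholding energy
`E_h(u) = (1/√h) ∫_Ω [ γ̃PV u K_h*(1_Ω - u) + γ̃SP u K_h*1_S + γ̃SV (1_Ω - u) K_h*1_S ] dx`,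
where `S = ℝ^d ∖ Ω = Ωᶜ`. -/
noncomputable def threshEnergy {d : ℕ} (Ω : Set (EuclideanSpace ℝ (Fin d)))
    (γPV γSP γSV K : EuclideanSpace ℝ (Fin d) → ℝ) (h : ℝ)
    (u : EuclideanSpace ℝ (Fin d) → ℝ) : ℝ :=
  (Real.sqrt h)⁻¹ * ∫ x in Ω,
    (γPV x * (u x * convK (scaledKernel K h) (fun y => Set.indicator Ω 1 y - u y) x)
      + γSP x * (u x * convK (scaledKernel K h) (Set.indicator Ωᶜ 1) x)
      + γSV x * ((Set.indicator Ω 1 x - u x) * convK (scaledKernel K h) (Set.indicator Ωᶜ 1) x))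

/-!
Since `∫ K_h = 1` and `v = 0` off `Ω`, pointwise
`v = K_h * v + ∫_Ω K_h(· - y) (v - v(y)) dy + v ∫_S K_h(· - y) dy`.
Multiply by `1 - v` and integrate over `Ω`. The first term gives the interfacial energy
(at most `C₁ √h`) and the last is at most the substrate energy (at most `C₂ √h`). The middle
term is nonpositive: symmetrising in `(x, y)` with the even kernel turns it into
`-½ ∫_Ω ∫_Ω K_h(x - y) (v(x) - v(y))² dx dy`.
-/

open Set

structure IsSymmetricDensity {G : Type*} [Neg G] [MeasurableSpace G] (k : G → ℝ)
    (μ : Measure G) : Prop where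
  measurable : Measurable k
  nonneg : ∀ x, 0 ≤ k x
  even : ∀ x, k (-x) = k x
  integrable : Integrable k μ
  integral_eq_one : ∫ x, k x ∂μ = 1

lemma integral_integral_nonpos_of_add_swap_nonpos {α : Type*} [MeasurableSpace α]
    {ν : Measure α} [SFinite ν] {F : α → α → ℝ} (hF : Integrable (Function.uncurry F) (ν.prod ν))
    (hF_swap : ∀ x y, F x y + F y x ≤ 0) :
    ∫ x, ∫ y, F x y ∂ν ∂ν ≤ 0 := by
  have hswap : ∫ x, ∫ y, F y x ∂ν ∂ν = ∫ x, ∫ y, F x y ∂ν ∂ν :=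
    (integral_integral_swap hF).symm
  have hsum : ∫ x, ∫ y, F x y ∂ν ∂ν + ∫ x, ∫ y, F y x ∂ν ∂ν
      = ∫ x, ∫ y, (F x y + F y x) ∂ν ∂ν := by
    have hleft : Integrable (fun x => ∫ y, F x y ∂ν) ν := hF.integral_prod_left
    have hright : Integrable (fun x => ∫ y, F y x ∂ν) ν := hF.swap.integral_prod_left
    rw [← integral_add hleft hright]
    refine integral_congr_ae ?_
    filter_upwards [hF.prod_right_ae, hF.swap.prod_right_ae] with x hx hx'
    exact (integral_add hx hx').symm
  have hnonpos : ∫ x, ∫ y, (F x y + F y x) ∂ν ∂ν ≤ 0 :=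
    integral_nonpos fun x => integral_nonpos fun y => hF_swap x y
  linarith

namespace IsSymmetricDensity

section

variable {G : Type*} [AddCommGroup G] [MeasurableSpace G] [MeasurableAdd₂ G]
  {μ : Measure G} [μ.IsAddLeftInvariant] {k : G → ℝ}

lemma setIntegral_sub_left_eq_integral_indicator (hk : IsSymmetricDensity k μ) {s : Set G}
    (hs : MeasurableSet s) (x : G) :
    ∫ y in s, k (x - y) ∂μ = ∫ y, s.indicator 1 (x + y) * k y ∂μ := by
  rw [← integral_indicator hs, ← integral_add_left_eq_self _ x]
  congr 1 with y
  by_cases hy : x + y ∈ s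
  · simp [hy, hk.even]
  · simp [hy]

variable [MeasurableNeg G] [μ.IsNegInvariant]

lemma integrable_sub_left (hk : IsSymmetricDensity k μ) (x : G) :
    Integrable (fun y => k (x - y)) μ :=
  hk.integrable.comp_sub_left x

lemma integral_sub_left (hk : IsSymmetricDensity k μ) (x : G) : ∫ y, k (x - y) ∂μ = 1 := by
  rw [integral_sub_left_eq_self k μ x, hk.integral_eq_one]

lemma integrable_sub_left_mul (hk : IsSymmetricDensity k μ) {f : G → ℝ}
    (hf : AEStronglyMeasurable f μ) (hf_le : ∀ y, |f y| ≤ 1) (x : G) :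
    Integrable (fun y => k (x - y) * f y) μ := by
  simpa only [mul_comm] using (hk.integrable_sub_left x).bdd_mul hf (ae_of_all _ hf_le)

lemma abs_setIntegral_sub_left_mul_le_one (hk : IsSymmetricDensity k μ) {f : G → ℝ}
    (hf : AEStronglyMeasurable f μ) (hf_le : ∀ y, |f y| ≤ 1) (s : Set G) (x : G) :
    |∫ y in s, k (x - y) * f y ∂μ| ≤ 1 :=
  calc |∫ y in s, k (x - y) * f y ∂μ| ≤ ∫ y in s, |k (x - y) * f y| ∂μ :=
        abs_integral_le_integral_abs
    _ ≤ ∫ y in s, k (x - y) ∂μ := by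
        refine integral_mono (hk.integrable_sub_left_mul hf hf_le x).restrict.abs
          (hk.integrable_sub_left x).restrict fun y => ?_
        rw [abs_mul, abs_of_nonneg (hk.nonneg _)]
        exact mul_le_of_le_one_right (hk.nonneg _) (hf_le y)
    _ ≤ ∫ y, k (x - y) ∂μ :=
        setIntegral_le_integral (hk.integrable_sub_left x) (ae_of_all _ fun _ => hk.nonneg _)
    _ = 1 := hk.integral_sub_left x

variable {Ω : Set G} {v : G → ℝ}

lemma eq_add_setIntegral_add_mul_setIntegral_compl (hk : IsSymmetricDensity k μ)
    (hΩ : MeasurableSet Ω) (hvm : Measurable v) (hv : ∀ x, v x ∈ Icc (0 : ℝ) 1)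
    (hvΩ : ∀ x ∉ Ω, v x = 0) (x : G) :
    v x = ∫ y, k (x - y) * v y ∂μ + ∫ y in Ω, k (x - y) * (v x - v y) ∂μ
      + v x * ∫ y in Ωᶜ, k (x - y) ∂μ := by
  have hdiff : Integrable (fun y => k (x - y) * (v x - v y)) μ :=
    hk.integrable_sub_left_mul (measurable_const.sub hvm).aestronglyMeasurable
      (fun y => Real.dist_le_of_mem_Icc_01 (hv x) (hv y)) x
  have hconv : Integrable (fun y => k (x - y) * v y) μ :=
    hk.integrable_sub_left_mul hvm.aestronglyMeasurable
      (fun y => abs_le.2 ⟨by linarith [(hv y).1], (hv y).2⟩) x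
  have htotal : ∫ y, k (x - y) * (v x - v y) ∂μ = v x - ∫ y, k (x - y) * v y ∂μ := by
    simp_rw [mul_sub]
    rw [integral_sub ((hk.integrable_sub_left x).mul_const _) hconv, integral_mul_const,
      hk.integral_sub_left, one_mul]
  have hcompl : ∫ y in Ωᶜ, k (x - y) * (v x - v y) ∂μ = v x * ∫ y in Ωᶜ, k (x - y) ∂μ := by
    rw [← integral_const_mul]
    refine setIntegral_congr_fun hΩ.compl fun y hy => ?_
    simp only [hvΩ y hy, sub_zero, mul_comm]
  rw [← integral_add_compl hΩ hdiff, hcompl] at htotal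
  linarith

variable [SFinite μ]

lemma integrable_sub_prod_restrict (hk : IsSymmetricDensity k μ) {s : Set G} (hs : μ s ≠ ⊤) :
    Integrable (fun p : G × G => k (p.1 - p.2)) ((μ.restrict s).prod (μ.restrict s)) := by
  have : IsFiniteMeasure (μ.restrict s) := isFiniteMeasure_restrict.2 hs
  have hm : Measurable fun p : G × G => k (p.1 - p.2) :=
    hk.measurable.comp (measurable_fst.sub measurable_snd)
  rw [integrable_prod_iff hm.aestronglyMeasurable]
  refine ⟨ae_of_all _ fun x => (hk.integrable_sub_left x).restrict,
    .of_bound hm.norm.stronglyMeasurable.integral_prod_right'.aestronglyMeasurable 1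
      (ae_of_all _ fun x => ?_)⟩
  simpa [abs_of_nonneg (hk.nonneg _)] using
    hk.abs_setIntegral_sub_left_mul_le_one aestronglyMeasurable_const
      (fun _ => (abs_one).le) s x

lemma setIntegral_one_sub_mul_setIntegral_sub_nonpos (hk : IsSymmetricDensity k μ)
    (hΩ : μ Ω ≠ ⊤) (hvm : Measurable v) (hv : ∀ x, v x ∈ Icc (0 : ℝ) 1) :
    ∫ x in Ω, (1 - v x) * ∫ y in Ω, k (x - y) * (v x - v y) ∂μ ∂μ ≤ 0 := by
  have hF : Integrable (Function.uncurry fun x y => (1 - v x) * (k (x - y) * (v x - v y)))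
      ((μ.restrict Ω).prod (μ.restrict Ω)) := by
    refine (hk.integrable_sub_prod_restrict hΩ).mono ?_ (ae_of_all _ fun p => ?_)
    · exact ((measurable_const.sub (hvm.comp measurable_fst)).mul
        ((hk.measurable.comp (measurable_fst.sub measurable_snd)).mul
          ((hvm.comp measurable_fst).sub (hvm.comp measurable_snd)))).aestronglyMeasurable
    · have h1 : |1 - v p.1| ≤ 1 :=
        Real.dist_le_of_mem_Icc_01 (right_mem_Icc.2 zero_le_one) (hv p.1)
      have h2 : |v p.1 - v p.2| ≤ 1 := Real.dist_le_of_mem_Icc_01 (hv p.1) (hv p.2)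
      show |(1 - v p.1) * (k (p.1 - p.2) * (v p.1 - v p.2))| ≤ |k (p.1 - p.2)|
      calc |(1 - v p.1) * (k (p.1 - p.2) * (v p.1 - v p.2))|
          = |1 - v p.1| * (|k (p.1 - p.2)| * |v p.1 - v p.2|) := by rw [abs_mul, abs_mul]
        _ ≤ 1 * (|k (p.1 - p.2)| * 1) := by gcongr
        _ = |k (p.1 - p.2)| := by ring
  simp_rw [← integral_const_mul]
  refine integral_integral_nonpos_of_add_swap_nonpos hF fun x y => ?_
  -- the symmetrised integrand is `-k(x - y) (v x - v y)²`
  rw [← neg_sub x y, hk.even]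
  nlinarith [mul_nonneg (hk.nonneg (x - y)) (sq_nonneg (v x - v y))]

lemma integrable_mul_setIntegral_sub_left_mul (hk : IsSymmetricDensity k μ) {ν : Measure G}
    [IsFiniteMeasure ν] {g : G → ℝ} (hg : Measurable g) (hg_le : ∀ x, |g x| ≤ 1)
    {f : G × G → ℝ} (hf : Measurable f) (hf_le : ∀ p, |f p| ≤ 1) (s : Set G) :
    Integrable (fun x => g x * ∫ y in s, k (x - y) * f (x, y) ∂μ) ν := by
  have hkf : Measurable fun p : G × G => k (p.1 - p.2) * f p :=
    (hk.measurable.comp (measurable_fst.sub measurable_snd)).mul hf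
  have hmeas : Measurable fun x => g x * ∫ y in s, k (x - y) * f (x, y) ∂μ :=
    hg.mul hkf.stronglyMeasurable.integral_prod_right'.measurable
  refine .of_bound hmeas.aestronglyMeasurable 1 (ae_of_all _ fun x => ?_)
  rw [Real.norm_eq_abs, abs_mul]
  exact mul_le_one₀ (hg_le x) (abs_nonneg _) (hk.abs_setIntegral_sub_left_mul_le_one
    (hf.comp measurable_prodMk_left).aestronglyMeasurable (fun y => hf_le (x, y)) s x)

theorem setIntegral_mul_one_sub_le (hk : IsSymmetricDensity k μ) (hΩ : MeasurableSet Ω)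
    (hΩ_fin : μ Ω ≠ ⊤) (hvm : Measurable v) (hv : ∀ x, v x ∈ Icc (0 : ℝ) 1)
    (hvΩ : ∀ x ∉ Ω, v x = 0) :
    ∫ x in Ω, v x * (1 - v x) ∂μ ≤ ∫ x in Ω, (1 - v x) * ∫ y, k (x - y) * v y ∂μ ∂μ
      + ∫ x in Ω, v x * ∫ y in Ωᶜ, k (x - y) ∂μ ∂μ := by
  have : IsFiniteMeasure (μ.restrict Ω) := isFiniteMeasure_restrict.2 hΩ_fin
  have hv_le : ∀ x, |v x| ≤ 1 := fun x => abs_le.2 ⟨by linarith [(hv x).1], (hv x).2⟩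
  have hv_one_sub : ∀ x, |1 - v x| ≤ 1 := fun x =>
    Real.dist_le_of_mem_Icc_01 (right_mem_Icc.2 zero_le_one) (hv x)
  have hconv : Integrable (fun x => (1 - v x) * ∫ y, k (x - y) * v y ∂μ) (μ.restrict Ω) := by
    simpa using hk.integrable_mul_setIntegral_sub_left_mul (measurable_const.sub hvm) hv_one_sub
      (hvm.comp measurable_snd) (fun p => hv_le p.2) univ
  have hmid : Integrable (fun x => (1 - v x) * ∫ y in Ω, k (x - y) * (v x - v y) ∂μ)
      (μ.restrict Ω) :=
    hk.integrable_mul_setIntegral_sub_left_mul (measurable_const.sub hvm) hv_one_sub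
      ((hvm.comp measurable_fst).sub (hvm.comp measurable_snd))
      (fun p => Real.dist_le_of_mem_Icc_01 (hv p.1) (hv p.2)) Ω
  have hout : Integrable (fun x => v x * ∫ y in Ωᶜ, k (x - y) ∂μ) (μ.restrict Ω) := by
    simpa using hk.integrable_mul_setIntegral_sub_left_mul hvm hv_le measurable_const
      (fun _ => (abs_one (α := ℝ)).le) Ωᶜ
  have hconv_mid : Integrable (fun x => (1 - v x) * ∫ y, k (x - y) * v y ∂μ
      + (1 - v x) * ∫ y in Ω, k (x - y) * (v x - v y) ∂μ) (μ.restrict Ω) :=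
    hconv.add hmid
  calc ∫ x in Ω, v x * (1 - v x) ∂μ
      ≤ ∫ x in Ω, ((1 - v x) * ∫ y, k (x - y) * v y ∂μ
          + (1 - v x) * ∫ y in Ω, k (x - y) * (v x - v y) ∂μ
          + v x * ∫ y in Ωᶜ, k (x - y) ∂μ) ∂μ := by
        refine integral_mono_of_nonneg
          (ae_of_all _ fun x => mul_nonneg (hv x).1 (by linarith [(hv x).2]))
          (hconv_mid.add hout) (ae_of_all _ fun x => ?_)
        have hout_nonneg : 0 ≤ ∫ y in Ωᶜ, k (x - y) ∂μ := integral_nonneg fun y => hk.nonneg _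
        dsimp only
        nth_rewrite 1 [hk.eq_add_setIntegral_add_mul_setIntegral_compl hΩ hvm hv hvΩ x]
        nlinarith [mul_nonneg (mul_nonneg (hv x).1 hout_nonneg) (hv x).1]
    _ = ∫ x in Ω, (1 - v x) * ∫ y, k (x - y) * v y ∂μ ∂μ
          + ∫ x in Ω, (1 - v x) * ∫ y in Ω, k (x - y) * (v x - v y) ∂μ ∂μ
          + ∫ x in Ω, v x * ∫ y in Ωᶜ, k (x - y) ∂μ ∂μ := by
        rw [integral_add hconv_mid hout, integral_add hconv hmid]
    _ ≤ _ := by linarith [hk.setIntegral_one_sub_mul_setIntegral_sub_nonpos hΩ_fin hvm hv]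

end

lemma scaledKernel {d : ℕ} {K : EuclideanSpace ℝ (Fin d) → ℝ}
    (hK : IsSymmetricDensity K volume) {h : ℝ} (hh : 0 < h) :
    IsSymmetricDensity (scaledKernel K h) volume := by
  have hs : 0 < Real.sqrt h := Real.sqrt_pos.2 hh
  refine ⟨(hK.measurable.comp (measurable_const_smul _)).const_mul _,
    fun x => mul_nonneg (Real.rpow_nonneg hh.le _) (hK.nonneg _),
    fun x => by simp only [_root_.scaledKernel, smul_neg, hK.even],
    (hK.integrable.comp_smul (inv_ne_zero hs.ne')).const_mul _, ?_⟩
  -- the change of variables `x ↦ x / √h` contributes `(√h)^d`, cancelling `h^{-d/2}`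
  simp only [_root_.scaledKernel]
  rw [integral_const_mul, Measure.integral_comp_inv_smul, hK.integral_eq_one,
    finrank_euclideanSpace, Fintype.card_fin, smul_eq_mul, mul_one,
    abs_of_nonneg (pow_nonneg hs.le _), Real.sqrt_eq_rpow, ← Real.rpow_natCast,
    ← Real.rpow_mul hh.le, ← Real.rpow_add hh, show -(d : ℝ) / 2 + 1 / 2 * d = 0 by ring,
    Real.rpow_zero]

end IsSymmetricDensity

theorem interface_smallness_general (d : ℕ) (a b cK C1 C2 : ℝ)
    (hC1 : 0 ≤ C1) (hC2 : 0 ≤ C2) :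
    ∃ c : ℝ, 0 < c ∧
      ∀ (K : EuclideanSpace ℝ (Fin d) → ℝ)
        (Ω : Set (EuclideanSpace ℝ (Fin d)))
        (v : EuclideanSpace ℝ (Fin d) → ℝ) (h : ℝ),
        Measurable K → (∀ x, 0 ≤ K x) → (∀ x, K (-x) = K x) →
        Integrable K → (∫ x, K x) = 1 →
        (∀ x, ‖x‖ * K x ≤ cK * K ((2:ℝ)⁻¹ • x)) →
        (∀ x ∈ Metric.ball (0 : EuclideanSpace ℝ (Fin d)) b, a ≤ K x) →
        IsOpen Ω → Bornology.IsBounded Ω → MeasurableSet Ω →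
        Measurable v → (∀ x, v x ∈ Set.Icc (0:ℝ) 1) → (∀ x ∉ Ω, v x = 0) →
        0 < h → h ≤ 1 →
        (Real.sqrt h)⁻¹ * (∫ x in Ω, (1 - v x) * convK (scaledKernel K h) v x) ≤ C1 →
        (Real.sqrt h)⁻¹ *
          (∫ x in Ω, ∫ y, Set.indicator Ωᶜ 1 (x + y) * scaledKernel K h y * v x) ≤ C2 →
        ∫ x in Ω, v x * (1 - v x) ≤ c * Real.sqrt h := by
  refine ⟨C1 + C2 + 1, by positivity, ?_⟩
  intro K Ω v h hKm hK0 hKe hKi hK1 _ _ _ hΩb hΩm hvm hv hvΩ hh _ hE1 hE2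
  have hk := (IsSymmetricDensity.mk hKm hK0 hKe hKi hK1).scaledKernel hh
  have hsubstrate : ∫ x in Ω, v x * ∫ y in Ωᶜ, scaledKernel K h (x - y)
      = ∫ x in Ω, ∫ y, Ωᶜ.indicator 1 (x + y) * scaledKernel K h y * v x := by
    refine integral_congr_ae (ae_of_all _ fun x => ?_)
    dsimp only
    rw [hk.setIntegral_sub_left_eq_integral_indicator hΩm.compl, integral_mul_const, mul_comm]
  have hsplit : ∫ x in Ω, v x * (1 - v x) ≤ (∫ x in Ω, (1 - v x) * convK (scaledKernel K h) v x)
      + ∫ x in Ω, ∫ y, Ωᶜ.indicator 1 (x + y) * scaledKernel K h y * v x :=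
    hsubstrate ▸ hk.setIntegral_mul_one_sub_le hΩm hΩb.measure_lt_top.ne hvm hv hvΩ
  have hs := Real.sqrt_pos.2 hh
  rw [inv_mul_le_iff₀ hs] at hE1 hE2
  linarith

/-- `∫_Ω v(1-v) dx ≤ c √h` whenever the rescaled interfacial and substrate terms
are bounded by `C₁` and `C₂`; the constant `c` depends only on `d, a, b, c_K, C₁, C₂`. -/
theorem interface_smallness (d : ℕ) (a b cK C1 C2 : ℝ)
    (ha : 0 < a) (hb : 0 < b) (hcK : 0 < cK) (hC1 : 0 ≤ C1) (hC2 : 0 ≤ C2) :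
    ∃ c : ℝ, 0 < c ∧
      ∀ (K : EuclideanSpace ℝ (Fin d) → ℝ)
        (Ω : Set (EuclideanSpace ℝ (Fin d)))
        (v : EuclideanSpace ℝ (Fin d) → ℝ) (h : ℝ),
        Measurable K → (∀ x, 0 ≤ K x) → (∀ x, K (-x) = K x) →
        Integrable K → (∫ x, K x) = 1 →
        (∀ x, ‖x‖ * K x ≤ cK * K ((2:ℝ)⁻¹ • x)) →
        (∀ x ∈ Metric.ball (0 : EuclideanSpace ℝ (Fin d)) b, a ≤ K x) →
        IsOpen Ω → Bornology.IsBounded Ω → MeasurableSet Ω →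
        Measurable v → (∀ x, v x ∈ Set.Icc (0:ℝ) 1) → (∀ x ∉ Ω, v x = 0) →
        0 < h → h ≤ 1 →
        (Real.sqrt h)⁻¹ * (∫ x in Ω, (1 - v x) * convK (scaledKernel K h) v x) ≤ C1 →
        (Real.sqrt h)⁻¹ *
          (∫ x in Ω, ∫ y, Set.indicator Ωᶜ 1 (x + y) * scaledKernel K h y * v x) ≤ C2 →
        ∫ x in Ω, v x * (1 - v x) ≤ c * Real.sqrt h :=
  interface_smallness_general d a b cK C1 C2 hC1 hC2
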